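/- Let G(n,k)#G(n,k) be the graph obtained from two disjoint copies of the generalized Petersen graph G(n,k) by deleting the edges u_0 u_1 and u_0' u_1' and adding the edges u_0 u_0' and u_1 u_1'. Then the P3-hull number of G(n,k)#G(n,k) equals n + 1. -/

import Mathlib

/-!
Lower bound: along the infection by a hull set `S` of a graph of minimum degree three, every vertex
infected in some round has two edges to earlier vertices, and the last round contributes one edge
more (an edge inside that round, or the third edge of a vertex whose neighbours were all infected
before). Hence `2|V| < 2|S| + |E|`, and `|V| = 4n`, `|E| ≤ 6n` give `|S| ≥ n + 1`.

Upper bound: with `d = gcd n k`, seed every second rim vertex and `d` consecutive inner vertices in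
each copy, `n + 1` vertices in all; the second copy needs one seed fewer because `u'₁` is infected
by `u₁` and `u'₂`. In each copy the rim path `u₁ … u_{n-d}` fills in first. The inner vertices
form `d` cycles under `x ↦ x + k`, each containing a seed and at most one of the rim positions not
yet infected; since both ends of an uninfected arc of such a cycle would need an uninfected spoke,
no such arc survives. The rest of the rim follows.
-/

open SimpleGraph

def infectStep {V : Type*} (G : SimpleGraph V) (S : Set V) : Set V :=
  S ∪ {v | ∃ a b, a ≠ b ∧ a ∈ S ∧ b ∈ S ∧ G.Adj v a ∧ G.Adj v b}

def infectIter {V : Type*} (G : SimpleGraph V) (S : Set V) : ℕ → Set V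
  | 0 => S
  | p + 1 => infectStep G (infectIter G S p)

def IsHullSet {V : Type*} (G : SimpleGraph V) (S : Set V) : Prop :=
  ∃ p, infectIter G S p = Set.univ

noncomputable def hullNumber {V : Type*} (G : SimpleGraph V) : ℕ :=
  sInf {m | ∃ S : Set V, S.ncard = m ∧ IsHullSet G S}

noncomputable def infectTime {V : Type*} (G : SimpleGraph V) (S : Set V) : ℕ :=
  sInf {p | infectIter G S p = Set.univ}

def IsCubic {V : Type*} (G : SimpleGraph V) : Prop :=
  ∀ v, {w | G.Adj v w}.ncard = 3

def IsDecyclingSet {V : Type*} (G : SimpleGraph V) (S : Set V) : Prop :=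
  (G.induce Sᶜ).IsAcyclic

noncomputable def decyclingNumber {V : Type*} (G : SimpleGraph V) : ℕ :=
  sInf {m | ∃ S : Set V, S.ncard = m ∧ IsDecyclingSet G S}

def pHull {V : Type*} (G : SimpleGraph V) (S : Set V) : Set V :=
  ⋃ p, infectIter G S p

noncomputable def graphDiam {V : Type*} (G : SimpleGraph V) : ℕ :=
  sSup {d | ∃ a b, d = G.dist a b}

noncomputable def maxCompDiam {V : Type*} (G : SimpleGraph V) : ℕ :=
  sSup {d | ∃ c : G.ConnectedComponent, d = graphDiam (G.induce c.supp)}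

open Fin.NatCast in
def genPetersen (n k : ℕ) [NeZero n] : SimpleGraph (Fin n ⊕ Fin n) :=
  SimpleGraph.fromRel fun x y =>
    match x, y with
    | Sum.inl i, Sum.inl j => j = i + 1
    | Sum.inl i, Sum.inr j => i = j
    | Sum.inr i, Sum.inr j => j = i + (k : Fin n)
    | _, _ => False

def petersenSurgery (n k : ℕ) [NeZero n] :
    SimpleGraph ((Fin n ⊕ Fin n) ⊕ (Fin n ⊕ Fin n)) :=
  SimpleGraph.fromRel fun x y =>
    match x, y with
    | Sum.inl a, Sum.inl b =>
        (genPetersen n k).Adj a b ∧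
          ¬((a = Sum.inl 0 ∧ b = Sum.inl 1) ∨ (a = Sum.inl 1 ∧ b = Sum.inl 0))
    | Sum.inr a, Sum.inr b =>
        (genPetersen n k).Adj a b ∧
          ¬((a = Sum.inl 0 ∧ b = Sum.inl 1) ∨ (a = Sum.inl 1 ∧ b = Sum.inl 0))
    | Sum.inl a, Sum.inr b =>
        (a = Sum.inl 0 ∧ b = Sum.inl 0) ∨ (a = Sum.inl 1 ∧ b = Sum.inl 1)
    | _, _ => False

open Finset

section Arithmetic

open Fin.NatCast

lemma Nat.exists_add_add_mul_modEq {n k : ℕ} (hk : n.gcd k < n) (a y : ℕ) :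
    ∃ j < n.gcd k, ∃ t, a + j + t * k ≡ y [MOD n] := by
  have hn : 0 < n := by omega
  obtain ⟨m, -, hm⟩ := Nat.exists_mul_mod_eq_gcd (k := n) (n := k) (by rwa [Nat.gcd_comm])
  set d := n.gcd k
  set c := y + n - a % n with hc
  -- Bézout gives `k * m ≡ d`, and `c ≡ y - a` splits as `c % d + d * (c / d)`
  refine ⟨c % d, Nat.mod_lt _ (Nat.gcd_pos_of_pos_left _ hn), m * (c / d), ?_⟩
  rw [← ZMod.natCast_eq_natCast_iff]
  have hkm : ((k * m : ℕ) : ZMod n) = d := by rw [← ZMod.natCast_mod, hm, Nat.gcd_comm]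
  have hcd : ((c % d : ℕ) : ZMod n) + d * (c / d : ℕ) = c := by
    exact_mod_cast congrArg (Nat.cast : ℕ → ZMod n) (Nat.mod_add_div c d)
  have hca : (c : ZMod n) + a = y := by
    rw [hc, Nat.cast_sub ((a.mod_lt hn).le.trans (Nat.le_add_left n y)), ZMod.natCast_mod]
    push_cast
    rw [ZMod.natCast_self]
    ring
  push_cast at hkm ⊢
  linear_combination hca + hcd + (c / d : ℕ) * hkm

lemma Nat.eq_of_add_add_mul_modEq {n k e j j' t : ℕ} (hj : j < n.gcd k) (hj' : j' < n.gcd k)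
    (h : e + j + t * k ≡ e + j' [MOD n]) : j = j' := by
  have h' := (Nat.ModEq.add_left_cancel' e (by simpa only [add_assoc] using h)).of_dvd
    (Nat.gcd_dvd_left n k)
  have hk : t * k ≡ 0 [MOD n.gcd k] :=
    (Nat.modEq_zero_iff_dvd).2 ((Nat.gcd_dvd_right n k).mul_left t)
  exact ((hk.add_left j).symm.trans h').eq_of_lt_of_lt hj hj'

lemma Nat.gcd_lt_of_not_dvd_two_mul {n k : ℕ} (hn : 0 < n) (h : ¬ n ∣ 2 * k) : n.gcd k < n :=
  (Nat.gcd_le_left k hn).lt_of_ne fun hgcd =>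
    h (Dvd.dvd.mul_left (hgcd ▸ Nat.gcd_dvd_right n k) 2)

variable {n : ℕ} [NeZero n]

lemma Fin.natCast_eq_natCast_iff {a b : ℕ} : (a : Fin n) = b ↔ a ≡ b [MOD n] := Fin.ext_iff

lemma Fin.natCast_ne_zero_of_lt {a : ℕ} (h0 : 0 < a) (ha : a < n) : (a : Fin n) ≠ 0 := by
  simpa using Nat.not_dvd_of_pos_of_lt h0 ha

lemma Fin.two_ne_zero_of_three_le (hn : 3 ≤ n) : (2 : Fin n) ≠ 0 := by
  simpa using Fin.natCast_ne_zero_of_lt (n := n) two_pos (by omega)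

lemma Fin.natCast_ne_natCast {a b : ℕ} (ha : a < n) (hb : b < n) (hab : a ≠ b) :
    (a : Fin n) ≠ b := fun h =>
  hab (Nat.ModEq.eq_of_lt_of_lt (Fin.natCast_eq_natCast_iff.1 h) ha hb)

lemma Fin.apply_natCast_of_modEq {α : Type*} (f : Fin n → α) {x y : ℕ} (h : x ≡ y [MOD n]) :
    f x = f y :=
  congrArg f (Fin.natCast_eq_natCast_iff.2 h)

lemma Fin.natCast_comp_injective {m : ℕ} {f : ℕ → ℕ} (hf : f.Injective)
    (hlt : ∀ i < m, f i < n) : Function.Injective fun i : Fin m => (f i : Fin n) := fun i j h =>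
  Fin.ext (hf ((Fin.natCast_eq_natCast_iff.1 h).eq_of_lt_of_lt (hlt _ i.2) (hlt _ j.2)))

end Arithmetic

lemma SimpleGraph.three_le_degree_of_adj {V : Type*} {G : SimpleGraph V} {x a b c : V}
    [Fintype (G.neighborSet x)] (ha : G.Adj x a) (hb : G.Adj x b) (hc : G.Adj x c)
    (hab : a ≠ b) (hac : a ≠ c) (hbc : b ≠ c) : 3 ≤ G.degree x := by
  classical
  rw [← card_neighborFinset_eq_degree, ← card_eq_three.2 ⟨a, b, c, hab, hac, hbc, rfl⟩]
  exact card_le_card (by simp [insert_subset_iff, ha, hb, hc])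

section Convex

variable {V : Type*} (G : SimpleGraph V)

def IsP3Convex (T : Set V) : Prop :=
  ∀ ⦃x a b : V⦄, a ≠ b → a ∈ T → b ∈ T → G.Adj x a → G.Adj x b → x ∈ T

variable {G}

lemma monotone_infectIter (S : Set V) : Monotone (infectIter G S) :=
  monotone_nat_of_le_succ fun _ => Set.subset_union_left

lemma subset_pHull (S : Set V) : S ⊆ pHull G S := Set.subset_iUnion (infectIter G S) 0

lemma isP3Convex_pHull (S : Set V) : IsP3Convex G (pHull G S) := by
  intro x a b hab ha hb hxa hxb
  obtain ⟨p, hp⟩ := Set.mem_iUnion.1 ha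
  obtain ⟨q, hq⟩ := Set.mem_iUnion.1 hb
  exact Set.mem_iUnion.2 ⟨max p q + 1, Or.inr ⟨a, b, hab,
    monotone_infectIter S (le_max_left p q) hp, monotone_infectIter S (le_max_right p q) hq,
    hxa, hxb⟩⟩

lemma isHullSet_of_forall_isP3Convex [Fintype V] {S : Set V}
    (h : ∀ T, S ⊆ T → IsP3Convex G T → T = Set.univ) : IsHullSet G S := by
  have hmem : ∀ x, ∃ p, x ∈ infectIter G S p := fun x => by
    rw [← Set.mem_iUnion, ← pHull, h _ (subset_pHull S) (isP3Convex_pHull S)]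
    trivial
  choose p hp using hmem
  exact ⟨univ.sup p, Set.eq_univ_of_forall fun x =>
    monotone_infectIter S (le_sup (mem_univ x)) (hp x)⟩

end Convex

section LowerBound

variable {V : Type*} [Fintype V] [DecidableEq V] (G : SimpleGraph V) [DecidableRel G.Adj]

def crossEdges (A B : Finset V) : Finset (Sym2 V) :=
  (B \ A).biUnion fun x => (G.neighborFinset x ∩ A).image (s(x, ·))

variable {G}

lemma mem_crossEdges {A B : Finset V} {e : Sym2 V} :
    e ∈ crossEdges G A B ↔ ∃ x ∈ B \ A, ∃ a, (G.Adj x a ∧ a ∈ A) ∧ s(x, a) = e := by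
  simp only [crossEdges, mem_biUnion, mem_image, mem_inter, mem_neighborFinset]

lemma card_crossEdges (A B : Finset V) :
    #(crossEdges G A B) = ∑ x ∈ B \ A, #(G.neighborFinset x ∩ A) := by
  refine (card_biUnion fun x hx y hy hxy => ?_).trans
    (sum_congr rfl fun x _ => card_image_of_injective _ fun _ _ => Sym2.congr_right.1)
  simp only [Function.onFun, Finset.disjoint_left, mem_image, mem_inter]
  rintro _ ⟨a, ⟨-, ha⟩, rfl⟩ ⟨b, ⟨-, hb⟩, h⟩
  rcases Sym2.eq_iff.1 h with ⟨rfl, -⟩ | ⟨rfl, -⟩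
  · exact hxy rfl
  · exact (mem_sdiff.1 hy).2 ha

lemma disjoint_crossEdges (A B : Finset V) :
    Disjoint (G.edgeFinset ∩ A.sym2) (crossEdges G A B) := by
  rw [Finset.disjoint_right]
  intro _ he hA
  obtain ⟨x, hx, a, -, rfl⟩ := mem_crossEdges.1 he
  exact (mem_sdiff.1 hx).2 (mk_mem_sym2_iff.1 (mem_inter.1 hA).2).1

lemma union_crossEdges_subset {A B : Finset V} (hAB : A ⊆ B) :
    G.edgeFinset ∩ A.sym2 ∪ crossEdges G A B ⊆ G.edgeFinset ∩ B.sym2 := by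
  intro e he
  rcases mem_union.1 he with he | he
  · exact inter_subset_inter_left (sym2_mono hAB) he
  · obtain ⟨x, hx, a, ⟨hxa, ha⟩, rfl⟩ := mem_crossEdges.1 he
    exact mem_inter.2
      ⟨G.mem_edgeFinset.2 hxa, mk_mem_sym2_iff.2 ⟨(mem_sdiff.1 hx).1, hAB ha⟩⟩

lemma card_edges_add_sum_le {A B : Finset V} (hAB : A ⊆ B) :
    #(G.edgeFinset ∩ A.sym2) + ∑ x ∈ B \ A, #(G.neighborFinset x ∩ A) ≤
      #(G.edgeFinset ∩ B.sym2) := by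
  rw [← card_crossEdges, ← card_union_of_disjoint (disjoint_crossEdges A B)]
  exact card_le_card (union_crossEdges_subset hAB)

lemma card_edges_add_sum_lt {A B : Finset V} (hAB : A ⊆ B) {x w : V} (hx : x ∈ B \ A)
    (hw : w ∈ B \ A) (hxw : G.Adj x w) :
    #(G.edgeFinset ∩ A.sym2) + ∑ x ∈ B \ A, #(G.neighborFinset x ∩ A) <
      #(G.edgeFinset ∩ B.sym2) := by
  rw [← card_crossEdges, ← card_union_of_disjoint (disjoint_crossEdges A B)]
  refine card_lt_card (ssubset_iff.2 ⟨s(x, w), fun h => ?_, insert_subset ?_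
    (union_crossEdges_subset hAB)⟩)
  · rcases mem_union.1 h with h | h
    · exact (mem_sdiff.1 hx).2 (mk_mem_sym2_iff.1 (mem_inter.1 h).2).1
    · obtain ⟨y, -, a, ⟨-, ha⟩, hya⟩ := mem_crossEdges.1 h
      rcases Sym2.eq_iff.1 hya with ⟨-, rfl⟩ | ⟨-, rfl⟩
      · exact (mem_sdiff.1 hw).2 ha
      · exact (mem_sdiff.1 hx).2 ha
  · exact mem_inter.2 ⟨G.mem_edgeFinset.2 hxw,
      mk_mem_sym2_iff.2 ⟨(mem_sdiff.1 hx).1, (mem_sdiff.1 hw).1⟩⟩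

lemma card_edges_add_two_mul_le {A B : Finset V} (hAB : A ⊆ B)
    (hnew : ∀ x ∈ B \ A, 2 ≤ #(G.neighborFinset x ∩ A)) :
    #(G.edgeFinset ∩ A.sym2) + 2 * #(B \ A) ≤ #(G.edgeFinset ∩ B.sym2) := by
  have := card_nsmul_le_sum _ _ _ hnew
  have := card_edges_add_sum_le (G := G) hAB
  rw [smul_eq_mul] at *
  omega

lemma card_edges_add_two_mul_lt (hdeg : ∀ x, 3 ≤ G.degree x) {A : Finset V} {x : V}
    (hx : x ∉ A) (hnew : ∀ y ∉ A, 2 ≤ #(G.neighborFinset y ∩ A)) :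
    #(G.edgeFinset ∩ A.sym2) + 2 * #Aᶜ < #G.edgeFinset := by
  have hnew' : ∀ y ∈ univ \ A, 2 ≤ #(G.neighborFinset y ∩ A) := fun y hy =>
    hnew y (mem_sdiff.1 hy).2
  have hx' : x ∈ univ \ A := mem_sdiff.2 ⟨mem_univ x, hx⟩
  rw [compl_eq_univ_sdiff]
  have huniv : G.edgeFinset ∩ (univ : Finset V).sym2 = G.edgeFinset := by
    rw [sym2_univ, inter_univ]
  by_cases hw : ∃ w ∉ A, G.Adj x w
  · obtain ⟨w, hwA, hxw⟩ := hw
    have := card_edges_add_sum_lt (subset_univ A) hx' (mem_sdiff.2 ⟨mem_univ w, hwA⟩) hxw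
    have := card_nsmul_le_sum _ _ _ hnew'
    rw [huniv, smul_eq_mul] at *
    omega
  · have hxA : G.neighborFinset x ∩ A = G.neighborFinset x :=
      inter_eq_left.2 fun w hw' =>
        by_contra fun h => hw ⟨w, h, (G.mem_neighborFinset x w).1 hw'⟩
    have hsum : ∑ _y ∈ univ \ A, 2 < ∑ y ∈ univ \ A, #(G.neighborFinset y ∩ A) :=
      sum_lt_sum hnew' ⟨x, hx', by rw [hxA, card_neighborFinset_eq_degree]; exact hdeg x⟩
    have := card_edges_add_sum_le (G := G) (subset_univ A)
    rw [sum_const, smul_eq_mul, huniv] at *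
    omega

lemma two_le_card_neighborFinset_inter {A : Finset V} {x : V} (hx : x ∈ infectStep G A)
    (hxA : x ∉ A) : 2 ≤ #(G.neighborFinset x ∩ A) := by
  obtain hx | ⟨a, b, hab, ha, hb, hxa, hxb⟩ := hx
  · exact absurd hx hxA
  · have hsub : {a, b} ⊆ G.neighborFinset x ∩ A := by
      simp [insert_subset_iff, hxa, hxb, mem_coe.1 ha, mem_coe.1 hb]
    simpa [hab] using card_le_card hsub

theorem two_mul_card_lt_of_isHullSet [Nonempty V] (hdeg : ∀ x, 3 ≤ G.degree x) {S : Set V}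
    (hS : IsHullSet G S) : 2 * Fintype.card V < 2 * S.ncard + #G.edgeFinset := by
  classical
  set A : ℕ → Finset V := fun p => (infectIter G S p).toFinset with hA
  have hnew : ∀ p, ∀ x ∉ A p, x ∈ A (p + 1) → 2 ≤ #(G.neighborFinset x ∩ A p) := by
    intro p x hx hx'
    refine two_le_card_neighborFinset_inter ?_ hx
    rw [hA, Set.coe_toFinset]
    exact Set.mem_toFinset.1 hx'
  have hsucc : ∀ p, A p ⊆ A (p + 1) := fun p x hx =>
    Set.mem_toFinset.2 (Or.inl (Set.mem_toFinset.1 hx))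
  have hinv : ∀ p, 2 * #(A p) ≤ #(G.edgeFinset ∩ (A p).sym2) + 2 * #(A 0) := by
    intro p
    induction p with
    | zero => omega
    | succ p ih =>
      have hstep := card_edges_add_two_mul_le (hsucc p) fun x hx =>
        hnew p x (mem_sdiff.1 hx).2 (mem_sdiff.1 hx).1
      have hsdiff := card_sdiff_add_card_eq_card (hsucc p)
      omega
  have hS0 : S.ncard = #(A 0) := Set.ncard_eq_toFinset_card' S
  have hP : A (Nat.find hS) = univ := by simpa [hA] using Nat.find_spec hS
  rcases hQ : Nat.find hS with _ | Q
  · obtain ⟨x⟩ := ‹Nonempty V›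
    obtain ⟨w, hxw⟩ := (G.degree_pos_iff_exists_adj x).1 (by have := hdeg x; omega)
    have hE : 0 < #G.edgeFinset := card_pos.2 ⟨s(x, w), G.mem_edgeFinset.2 hxw⟩
    rw [hS0, ← hQ, hP, card_univ]
    omega
  · have hQ' : A Q ≠ univ := fun h =>
      Nat.find_min hS (by omega : Q < Nat.find hS) (by simpa [hA] using h)
    obtain ⟨x, hx⟩ := not_forall.1 (mt eq_univ_iff_forall.2 hQ')
    have hlast := card_edges_add_two_mul_lt hdeg hx fun y hy =>
      hnew Q y hy (by rw [← hQ, hP]; exact mem_univ y)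
    have hinvQ := hinv Q
    have hcompl := card_add_card_compl (A Q)
    omega

end LowerBound

section CutPetersen

open Fin.NatCast

variable {V : Type*} {n : ℕ} [NeZero n]

/-- `u`, `v` label the outer and inner cycle of a copy of `G(n,k)` in `G`, except that the rim
edge `u₀u₁` may be missing. -/
structure IsCutPetersenCopy (G : SimpleGraph V) (k : ℕ) (u v : Fin n → V) : Prop where
  adj_rim : ∀ i : Fin n, i ≠ 0 → G.Adj (u i) (u (i + 1))
  adj_spoke : ∀ i, G.Adj (u i) (v i)
  adj_inner : ∀ i, G.Adj (v i) (v (i + k))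
  injective_u : Function.Injective u
  injective_v : Function.Injective v
  u_ne_v : ∀ i j, u i ≠ v j

namespace IsCutPetersenCopy

variable {G : SimpleGraph V} {k : ℕ} {u v : Fin n → V} {T : Set V}

lemma three_le_degree_v (hC : IsCutPetersenCopy G k u v) (h2k : ¬ n ∣ 2 * k) (i : Fin n)
    [Fintype (G.neighborSet (v i))] : 3 ≤ G.degree (v i) := by
  have hprev := hC.adj_inner (i - k)
  rw [sub_add_cancel] at hprev
  refine SimpleGraph.three_le_degree_of_adj (hC.adj_inner i) hprev.symm (hC.adj_spoke i).symm
    (fun h => h2k ?_) (hC.u_ne_v _ _).symm (hC.u_ne_v _ _).symm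
  rw [← Fin.natCast_eq_zero, two_mul, Nat.cast_add]
  exact eq_neg_iff_add_eq_zero.1 (add_left_cancel ((hC.injective_v h).trans (sub_eq_add_neg i k)))

lemma three_le_degree_u (hC : IsCutPetersenCopy G k u v) (hn : 3 ≤ n) {i : Fin n} (hi0 : i ≠ 0)
    (hi1 : i ≠ 1) [Fintype (G.neighborSet (u i))] : 3 ≤ G.degree (u i) := by
  have hprev := hC.adj_rim (i - 1) (sub_ne_zero.2 hi1)
  rw [sub_add_cancel] at hprev
  refine SimpleGraph.three_le_degree_of_adj (hC.adj_rim i hi0) hprev.symm (hC.adj_spoke i)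
    (fun h => Fin.two_ne_zero_of_three_le hn ?_) (hC.u_ne_v _ _) (hC.u_ne_v _ _)
  rw [← one_add_one_eq_two]
  exact eq_neg_iff_add_eq_zero.1 (add_left_cancel ((hC.injective_u h).trans (sub_eq_add_neg i 1)))

lemma adj_rim_natCast (hC : IsCutPetersenCopy G k u v) {x : ℕ} (hx : ¬ n ∣ x) :
    G.Adj (u x) (u (x + 1 : ℕ)) := by
  simpa using hC.adj_rim x (by simpa using hx)

lemma adj_inner_natCast (hC : IsCutPetersenCopy G k u v) (x : ℕ) :
    G.Adj (v x) (v (x + k : ℕ)) := by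
  simpa using hC.adj_inner x

lemma u_mem_of_alternating (hC : IsCutPetersenCopy G k u v) (hT : IsP3Convex G T) {a j : ℕ}
    (ha : 1 ≤ a) (hlt : a + 2 * j < n) (hseed : ∀ i ≤ j, u (a + 2 * i : ℕ) ∈ T) :
    ∀ i ≤ 2 * j, u (a + i : ℕ) ∈ T := by
  intro i hi
  obtain ⟨r, rfl | rfl⟩ := Nat.even_or_odd' i
  · exact hseed r (by omega)
  · have h1 := hC.adj_rim_natCast (x := a + 2 * r) (Nat.not_dvd_of_pos_of_lt (by omega) (by omega))
    have h2 := hC.adj_rim_natCast (x := a + 2 * r + 1)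
      (Nat.not_dvd_of_pos_of_lt (by omega) (by omega))
    rw [← add_assoc]
    refine hT (fun h => ?_) (hseed r (by omega)) ?_ h1.symm h2
    · exact Fin.natCast_ne_natCast (n := n) (by omega) (by omega) (by omega) (hC.injective_u h)
    · simpa [show a + 2 * r + 1 + 1 = a + 2 * (r + 1) by ring] using hseed (r + 1) (by omega)

lemma u_mem_of_ladder (hC : IsCutPetersenCopy G k u v) (hT : IsP3Convex G T) {a l : ℕ}
    (ha : 1 ≤ a) (hl : a + l ≤ n) (hu : u a ∈ T) (hv : ∀ i < l, v (a + 1 + i : ℕ) ∈ T) :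
    ∀ i ≤ l, u (a + i : ℕ) ∈ T := by
  intro i hi
  induction i with
  | zero => simpa using hu
  | succ i ih =>
    have h := hC.adj_rim_natCast (x := a + i) (Nat.not_dvd_of_pos_of_lt (by omega) (by omega))
    rw [← add_assoc]
    refine hT (hC.u_ne_v _ _) (ih (by omega)) ?_ h.symm (hC.adj_spoke _)
    simpa [add_right_comm a 1 i] using hv i (by omega)

lemma u_mem_of_seeds (hC : IsCutPetersenCopy G k u v) (hT : IsP3Convex G T) {a j l : ℕ}
    (ha : 1 ≤ a) (hlt : a + 2 * j + l < n) (hseed : ∀ i ≤ j, u (a + 2 * i : ℕ) ∈ T)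
    (hrun : ∀ i < l, v (a + 2 * j + 1 + i : ℕ) ∈ T) (x : ℕ) (hax : a ≤ x)
    (hx : x ≤ a + 2 * j + l) : u x ∈ T := by
  have halt := hC.u_mem_of_alternating hT ha (by omega) hseed
  obtain hx' | hx' := le_or_gt x (a + 2 * j)
  · simpa [Nat.add_sub_cancel' hax] using halt (x - a) (by omega)
  · have := hC.u_mem_of_ladder hT (by omega) (by omega) (by simpa using halt (2 * j) le_rfl) hrun
      (x - (a + 2 * j)) (by omega)
    rwa [Nat.add_sub_cancel' hx'.le] at this

lemma u_notMem_of_v_notMem_of_v_add_mem (hC : IsCutPetersenCopy G k u v) (hT : IsP3Convex G T)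
    {x : ℕ} (hx : v x ∉ T) (hxk : v (x + k : ℕ) ∈ T) : u x ∉ T :=
  fun hu => hx (hT (hC.u_ne_v _ _) hu hxk (hC.adj_spoke _).symm (hC.adj_inner_natCast x))

lemma u_add_notMem_of_v_mem_of_v_add_notMem (hC : IsCutPetersenCopy G k u v) (hT : IsP3Convex G T)
    {x : ℕ} (hx : v x ∈ T) (hxk : v (x + k : ℕ) ∉ T) : u (x + k : ℕ) ∉ T :=
  fun hu => hxk (hT (hC.u_ne_v _ _) hu hx (hC.adj_spoke _).symm (hC.adj_inner_natCast x).symm)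

lemma v_add_mem_of_v_mem_of_v_add_two_mul_mem (hC : IsCutPetersenCopy G k u v)
    (hT : IsP3Convex G T) (h2k : ¬ n ∣ 2 * k)
    {x : ℕ} (hx : v x ∈ T) (hx2k : v (x + 2 * k : ℕ) ∈ T) : v (x + k : ℕ) ∈ T := by
  have hne : v x ≠ v (x + 2 * k : ℕ) := fun h => h2k <| by
    have := (Fin.natCast_eq_natCast_iff.1 (hC.injective_v h)).symm
    exact (Nat.modEq_zero_iff_dvd).1 (Nat.ModEq.add_left_cancel' x (by simpa using this))
  refine hT hne hx hx2k (hC.adj_inner_natCast x).symm ?_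
  simpa [two_mul, add_assoc] using hC.adj_inner_natCast (x + k)

lemma exists_modEq_of_u_notMem (hrim : ∀ x, 1 ≤ x → x ≤ n - n.gcd k → u x ∈ T) {x : ℕ}
    (hx : u x ∉ T) : ∃ j < n.gcd k, n + 1 - n.gcd k + j ≡ x [MOD n] := by
  have hd : 0 < n.gcd k := Nat.gcd_pos_of_pos_left k (NeZero.pos n)
  have hdn : n.gcd k ≤ n := Nat.gcd_le_left k (NeZero.pos n)
  have hxn := Nat.mod_lt x (NeZero.pos n)
  rw [Fin.apply_natCast_of_modEq u (Nat.mod_modEq x n).symm] at hx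
  obtain h0 | hlt : x % n = 0 ∨ n - n.gcd k < x % n := by
    by_contra! h
    exact hx (hrim _ (by omega) h.2)
  · refine ⟨n.gcd k - 1, by omega, ?_⟩
    rw [show n + 1 - n.gcd k + (n.gcd k - 1) = n by omega]
    exact (Nat.mod_self n).trans h0.symm
  · refine ⟨x % n - (n + 1 - n.gcd k), by omega, ?_⟩
    rw [Nat.add_sub_cancel' (by omega)]
    exact Nat.mod_modEq x n

/-- The rim positions `n + 1 - d, …, n` (`d = gcd n k`) meet each cycle `x ↦ x + k` of inner
vertices at most once, so a maximal uninfected arc of such a cycle, whose two ends must have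
uninfected spokes, is a single vertex; and that vertex has two infected neighbours. -/
lemma v_mem (hC : IsCutPetersenCopy G k u v) (hT : IsP3Convex G T) (h2k : ¬ n ∣ 2 * k)
    (hrim : ∀ x, 1 ≤ x → x ≤ n - n.gcd k → u x ∈ T) {a : ℕ}
    (hrun : ∀ j < n.gcd k, v (a + j : ℕ) ∈ T) (y : ℕ) : v y ∈ T := by
  by_contra hy
  obtain ⟨j, hj, t, ht⟩ :=
    Nat.exists_add_add_mul_modEq (Nat.gcd_lt_of_not_dvd_two_mul (NeZero.pos n) h2k) a y
  obtain ⟨i, hi, hi'⟩ := Nat.exists_not_and_succ_of_not_zero_of_exists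
    (p := fun i => v (a + j + i * k : ℕ) ∉ T) (by simpa using hrun j hj)
    ⟨t, by rwa [Fin.apply_natCast_of_modEq v ht]⟩
  -- on the way from a seed to `y`, `x` is the last infected vertex and `w` the first uninfected one
  simp only [add_one_mul, ← add_assoc] at hi'
  set x := a + j + i * k
  have hvx : v x ∈ T := not_not.1 hi
  set w := x + k with hw
  have huw : u w ∉ T := hC.u_add_notMem_of_v_mem_of_v_add_notMem hT hvx hi'
  have hround : v (w + (n - 1) * k : ℕ) ∈ T := by
    have hnk : w + (n - 1) * k = x + n * k := by
      rw [hw, add_assoc, add_comm k, ← add_one_mul, Nat.sub_one_add_one (NeZero.ne n)]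
    have : w + (n - 1) * k ≡ x [MOD n] := hnk ▸ Nat.add_mul_mod_self_left x n k
    rwa [Fin.apply_natCast_of_modEq v this]
  -- going on from `w` around the cycle back to `x`, `w + i' * k` is the last uninfected vertex
  obtain ⟨i', hi'₁, hi'₂⟩ := Nat.exists_not_and_succ_of_not_zero_of_exists
    (p := fun i => v (w + i * k : ℕ) ∈ T) (by simpa using hi') ⟨n - 1, hround⟩
  simp only [add_one_mul, ← add_assoc] at hi'₂
  have huw' : u (w + i' * k : ℕ) ∉ T := hC.u_notMem_of_v_notMem_of_v_add_mem hT hi'₁ hi'₂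
  obtain ⟨j₁, hj₁, hw₁⟩ := exists_modEq_of_u_notMem hrim huw
  obtain ⟨j₂, hj₂, hw₂⟩ := exists_modEq_of_u_notMem hrim huw'
  have hww' : w + i' * k ≡ w [MOD n] := by
    rw [Nat.eq_of_add_add_mul_modEq hj₁ hj₂ ((hw₁.add_right _).trans hw₂.symm)] at hw₁
    exact hw₂.symm.trans hw₁
  have hvwk : v (w + k : ℕ) ∈ T := by
    rwa [← Fin.apply_natCast_of_modEq v (hww'.add_right k)]
  exact hi' (hC.v_add_mem_of_v_mem_of_v_add_two_mul_mem hT h2k hvx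
    (by rwa [show x + 2 * k = w + k by omega]))

lemma u_mem_and_v_mem (hC : IsCutPetersenCopy G k u v) (hT : IsP3Convex G T) (h2k : ¬ n ∣ 2 * k)
    (hrim : ∀ x, 1 ≤ x → x ≤ n - n.gcd k → u x ∈ T) {a : ℕ}
    (hrun : ∀ j < n.gcd k, v (a + j : ℕ) ∈ T) (i : Fin n) : u i ∈ T ∧ v i ∈ T := by
  have hgcd := Nat.gcd_lt_of_not_dvd_two_mul (NeZero.pos n) h2k
  have hv := hC.v_mem hT h2k hrim hrun
  refine ⟨?_, by simpa using hv i⟩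
  have hladder := hC.u_mem_of_ladder hT (a := n - n.gcd k) (l := n.gcd k) (by omega) (by omega)
    (hrim _ (by omega) le_rfl) fun j _ => hv _
  rcases Nat.eq_zero_or_pos i.val with h0 | hpos
  · obtain rfl : i = 0 := Fin.ext h0
    simpa [Nat.sub_add_cancel hgcd.le] using hladder _ le_rfl
  · by_cases hi : i.val ≤ n - n.gcd k
    · simpa using hrim i.val hpos hi
    · simpa [Nat.add_sub_cancel' (not_le.1 hi).le] using hladder (i.val - (n - n.gcd k)) (by omega)

end IsCutPetersenCopy

end CutPetersen

section Surgery

open Fin.NatCast Sum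

variable {n k : ℕ}

def sheet : Bool → Fin n ⊕ Fin n → (Fin n ⊕ Fin n) ⊕ (Fin n ⊕ Fin n)
  | false => inl
  | true => inr

lemma sheet_injective (b : Bool) : Function.Injective (sheet (n := n) b) := by
  cases b
  exacts [inl_injective, inr_injective]

lemma exists_eq_sheet (x : (Fin n ⊕ Fin n) ⊕ (Fin n ⊕ Fin n)) : ∃ b a, x = sheet b a := by
  rcases x with a | a
  exacts [⟨false, a, rfl⟩, ⟨true, a, rfl⟩]

lemma sheet_ne_sheet_not (b : Bool) (a c : Fin n ⊕ Fin n) : sheet b a ≠ sheet (!b) c := by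
  cases b <;> simp [sheet]

variable [NeZero n]

@[simp] lemma genPetersen_adj_inl_inl {i j : Fin n} :
    (genPetersen n k).Adj (inl i) (inl j) ↔ i ≠ j ∧ (j = i + 1 ∨ i = j + 1) := by
  simp [genPetersen]

@[simp] lemma genPetersen_adj_inl_inr {i j : Fin n} :
    (genPetersen n k).Adj (inl i) (inr j) ↔ i = j := by
  simp [genPetersen]

@[simp] lemma genPetersen_adj_inr_inl {i j : Fin n} :
    (genPetersen n k).Adj (inr i) (inl j) ↔ j = i := by
  simp [genPetersen]

@[simp] lemma genPetersen_adj_inr_inr {i j : Fin n} :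
    (genPetersen n k).Adj (inr i) (inr j) ↔ i ≠ j ∧ (j = i + k ∨ i = j + k) := by
  simp [genPetersen]

lemma petersenSurgery_adj_sheet {b : Bool} {a c : Fin n ⊕ Fin n} :
    (petersenSurgery n k).Adj (sheet b a) (sheet b c) ↔ (genPetersen n k).Adj a c ∧
      ¬((a = inl 0 ∧ c = inl 1) ∨ (a = inl 1 ∧ c = inl 0)) := by
  have hsymm : ∀ a c : Fin n ⊕ Fin n, (genPetersen n k).Adj a c ∧
      ¬((a = inl 0 ∧ c = inl 1) ∨ (a = inl 1 ∧ c = inl 0)) →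
      (genPetersen n k).Adj c a ∧ ¬((c = inl 0 ∧ a = inl 1) ∨ (c = inl 1 ∧ a = inl 0)) :=
    fun a c ⟨h, hd⟩ => ⟨h.symm, by tauto⟩
  cases b <;> simp only [sheet, petersenSurgery, SimpleGraph.fromRel_adj, ne_eq, inl.injEq,
    inr.injEq] <;>
    exact ⟨fun ⟨_, h⟩ => h.elim id (hsymm c a), fun h => ⟨h.1.ne, .inl h⟩⟩

lemma petersenSurgery_adj_sheet_not {b : Bool} {a c : Fin n ⊕ Fin n} :
    (petersenSurgery n k).Adj (sheet b a) (sheet (!b) c) ↔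
      a = c ∧ (a = inl 0 ∨ a = inl 1) := by
  cases b <;> simp only [sheet, petersenSurgery, SimpleGraph.fromRel_adj, Bool.not_false,
    Bool.not_true] <;> aesop

lemma isCutPetersenCopy_sheet (hn : 3 ≤ n) (hk : 0 < k) (hkn : k < n) (b : Bool) :
    IsCutPetersenCopy (petersenSurgery n k) k (sheet b ∘ inl) (sheet b ∘ inr) where
  adj_rim i hi := by
    have h1 : (1 : Fin n) ≠ 0 := by simp; omega
    have h2 : (1 + 1 : Fin n) ≠ 0 :=
      one_add_one_eq_two (R := Fin n) ▸ Fin.two_ne_zero_of_three_le hn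
    refine petersenSurgery_adj_sheet.2 ⟨by simpa using h1, ?_⟩
    simp only [inl.injEq, hi, false_and, false_or, not_and]
    rintro rfl
    exact h2
  adj_spoke i := petersenSurgery_adj_sheet.2 ⟨by simp, by simp⟩
  adj_inner i := petersenSurgery_adj_sheet.2
    ⟨by simpa using Fin.natCast_ne_zero_of_lt hk hkn, by simp⟩
  injective_u := (sheet_injective b).comp inl_injective
  injective_v := (sheet_injective b).comp inr_injective
  u_ne_v i j h := by simpa using sheet_injective b h

lemma three_le_degree_petersenSurgery (hn : 3 ≤ n) (hk : 0 < k) (h2k : 2 * k < n)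
    [DecidableRel (petersenSurgery n k).Adj] (x : (Fin n ⊕ Fin n) ⊕ (Fin n ⊕ Fin n)) :
    3 ≤ (petersenSurgery n k).degree x := by
  have hC := isCutPetersenCopy_sheet (k := k) hn hk (by omega)
  have h1 : (1 : Fin n) ≠ 0 := by simp; omega
  have hbridge : ∀ b i, (i = 0 ∨ i = 1) →
      (petersenSurgery n k).Adj (sheet b (inl i)) (sheet (!b) (inl i)) := fun b i hi =>
    petersenSurgery_adj_sheet_not.2 ⟨rfl, by simpa using hi⟩
  obtain ⟨b, i | i, rfl⟩ := exists_eq_sheet x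
  · by_cases hi0 : i = 0
    · subst hi0
      have hprev := (hC b).adj_rim (-1) (neg_ne_zero.2 h1)
      rw [neg_add_cancel] at hprev
      exact SimpleGraph.three_le_degree_of_adj hprev.symm ((hC b).adj_spoke 0)
        (hbridge b 0 (.inl rfl)) ((hC b).u_ne_v _ _) (sheet_ne_sheet_not _ _ _)
        (sheet_ne_sheet_not _ _ _)
    by_cases hi1 : i = 1
    · subst hi1
      exact SimpleGraph.three_le_degree_of_adj ((hC b).adj_rim 1 h1) ((hC b).adj_spoke 1)
        (hbridge b 1 (.inr rfl)) ((hC b).u_ne_v _ _) (sheet_ne_sheet_not _ _ _)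
        (sheet_ne_sheet_not _ _ _)
    exact (hC b).three_le_degree_u hn hi0 hi1
  · exact (hC b).three_le_degree_v (Nat.not_dvd_of_pos_of_lt (by omega) h2k) i

/-- Each copy has `3n` edge slots (rim, spoke, inner at every index); the slot of its deleted
rim edge `u₀u₁` is filled by one of the two bridging edges. -/
def surgeryEdge (b : Bool) :
    Fin n ⊕ Fin n ⊕ Fin n → Sym2 ((Fin n ⊕ Fin n) ⊕ (Fin n ⊕ Fin n))
  | inl i =>
    if i = 0 then s(sheet false (inl (bif b then 1 else 0)), sheet true (inl (bif b then 1 else 0)))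
    else s(sheet b (inl i), sheet b (inl (i + 1)))
  | inr (inl i) => s(sheet b (inl i), sheet b (inr i))
  | inr (inr i) => s(sheet b (inr i), sheet b (inr (i + k)))

lemma exists_surgeryEdge_eq {x y : (Fin n ⊕ Fin n) ⊕ (Fin n ⊕ Fin n)}
    (h : (petersenSurgery n k).Adj x y) : ∃ b p, surgeryEdge (k := k) b p = s(x, y) := by
  obtain ⟨b, a, rfl⟩ := exists_eq_sheet x
  obtain ⟨b', c, rfl⟩ := exists_eq_sheet y
  obtain rfl | rfl : b = b' ∨ b' = !b := by cases b <;> cases b' <;> simp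
  · obtain ⟨hadj, hdel⟩ := petersenSurgery_adj_sheet.1 h
    rcases a with i | i <;> rcases c with j | j
    · obtain ⟨-, rfl | rfl⟩ := genPetersen_adj_inl_inl.1 hadj
      · have hi : i ≠ 0 := by rintro rfl; simp at hdel
        exact ⟨b, inl i, by simp [surgeryEdge, hi]⟩
      · have hj : j ≠ 0 := by rintro rfl; simp at hdel
        exact ⟨b, inl j, by simp [surgeryEdge, hj, Sym2.eq_swap]⟩
    · obtain rfl := genPetersen_adj_inl_inr.1 hadj
      exact ⟨b, inr (inl i), rfl⟩
    · obtain rfl := genPetersen_adj_inr_inl.1 hadj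
      exact ⟨b, inr (inl j), Sym2.eq_swap⟩
    · obtain ⟨-, rfl | rfl⟩ := genPetersen_adj_inr_inr.1 hadj
      exacts [⟨b, inr (inr i), rfl⟩, ⟨b, inr (inr j), Sym2.eq_swap⟩]
  · obtain ⟨rfl, rfl | rfl⟩ := petersenSurgery_adj_sheet_not.1 h
    · exact ⟨false, inl 0, by cases b <;> simp [surgeryEdge, sheet, Sym2.eq_swap]⟩
    · exact ⟨true, inl 0, by cases b <;> simp [surgeryEdge, sheet, Sym2.eq_swap]⟩

lemma card_edgeFinset_petersenSurgery_le [DecidableRel (petersenSurgery n k).Adj] :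
    #(petersenSurgery n k).edgeFinset ≤ 6 * n := by
  have hsub : (petersenSurgery n k).edgeFinset ⊆
      univ.image fun p : Bool × (Fin n ⊕ Fin n ⊕ Fin n) => surgeryEdge (k := k) p.1 p.2 := by
    intro e he
    induction e with
    | h x y =>
      obtain ⟨b, p, hp⟩ := exists_surgeryEdge_eq (SimpleGraph.mem_edgeFinset.1 he)
      exact mem_image.2 ⟨(b, p), mem_univ _, hp⟩
  calc #(petersenSurgery n k).edgeFinset
      ≤ #(univ : Finset (Bool × (Fin n ⊕ Fin n ⊕ Fin n))) :=
        (card_le_card hsub).trans card_image_le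
    _ = 6 * n := by
      simp only [card_univ, Fintype.card_prod, Fintype.card_bool, Fintype.card_sum,
        Fintype.card_fin]
      ring

variable (n k) in
/-- With `d = gcd n k`, `q = ⌊n/2⌋ + 1 - d` and `p = ⌈n/2⌉ - d`: the rim vertices
`u₁, u₃, …, u_{2q-1}` and inner vertices `v_{2q}, …, v_{2q+d-1}` of the first copy, and
`u'₂, u'₄, …, u'_{2p}` and `v'_{2p+1}, …, v'_{2p+d}` of the second. -/
def surgerySeeds : Set ((Fin n ⊕ Fin n) ⊕ (Fin n ⊕ Fin n)) :=
  Set.range <| Sum.map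
    (Sum.map (fun i : Fin (n / 2 + 1 - n.gcd k) => ((1 + 2 * i : ℕ) : Fin n))
      (fun j : Fin (n.gcd k) => ((2 * (n / 2 + 1 - n.gcd k) + j : ℕ) : Fin n)))
    (Sum.map (fun i : Fin ((n + 1) / 2 - n.gcd k) => ((2 + 2 * i : ℕ) : Fin n))
      (fun j : Fin (n.gcd k) => ((2 * ((n + 1) / 2 - n.gcd k) + 1 + j : ℕ) : Fin n)))

lemma ncard_surgerySeeds (hk : 0 < k) (h2k : 2 * k < n) : (surgerySeeds n k).ncard = n + 1 := by
  have hd : 0 < n.gcd k := Nat.gcd_pos_of_pos_right n hk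
  have hdk : n.gcd k ≤ k := Nat.gcd_le_right n hk
  rw [surgerySeeds, Set.ncard_range_of_injective]
  · simp only [Nat.card_eq_fintype_card, Fintype.card_sum, Fintype.card_fin]
    omega
  have hrim : ∀ (m a : ℕ), a + 2 * m ≤ n + 1 →
      Function.Injective fun i : Fin m => ((a + 2 * i : ℕ) : Fin n) := fun m a h =>
    Fin.natCast_comp_injective (f := (a + 2 * ·)) (fun _ _ h => by beta_reduce at h; omega)
      fun i hi => by omega
  have hrun : ∀ a, Function.Injective fun j : Fin (n.gcd k) => ((a + j : ℕ) : Fin n) :=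
    fun a i j h => Fin.ext <| (Nat.ModEq.add_left_cancel' a (Fin.natCast_eq_natCast_iff.1 h))
      |>.eq_of_lt_of_lt (by omega) (by omega)
  exact ((hrim _ 1 (by omega)).sumMap (hrun _)).sumMap ((hrim _ 2 (by omega)).sumMap (hrun _))

lemma isHullSet_surgerySeeds (hn : 3 ≤ n) (hk : 0 < k) (h2k : 2 * k < n) :
    IsHullSet (petersenSurgery n k) (surgerySeeds n k) := by
  refine isHullSet_of_forall_isP3Convex fun T hST hT => ?_
  set d := n.gcd k
  set q := n / 2 + 1 - d
  set p := (n + 1) / 2 - d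
  have hd : 0 < d := Nat.gcd_pos_of_pos_right n hk
  have hdk : d ≤ k := Nat.gcd_le_right n hk
  have hC := isCutPetersenCopy_sheet hn hk (by omega)
  have h2kn : ¬ n ∣ 2 * k := Nat.not_dvd_of_pos_of_lt (by omega) h2k
  have hu₁ : ∀ i < q, sheet false (inl (1 + 2 * i : ℕ)) ∈ T := fun i hi =>
    hST ⟨inl (inl ⟨i, hi⟩), rfl⟩
  have hv₁ : ∀ j < d, sheet false (inr (2 * q + j : ℕ)) ∈ T := fun j hj =>
    hST ⟨inl (inr ⟨j, hj⟩), rfl⟩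
  have hu₂ : ∀ i < p, sheet true (inl (2 + 2 * i : ℕ)) ∈ T := fun i hi =>
    hST ⟨inr (inl ⟨i, hi⟩), rfl⟩
  have hv₂ : ∀ j < d, sheet true (inr (2 * p + 1 + j : ℕ)) ∈ T := fun j hj =>
    hST ⟨inr (inr ⟨j, hj⟩), rfl⟩
  have hrim₁ : ∀ x, 1 ≤ x → x ≤ n - d → sheet false (inl x) ∈ T := fun x h1 h2 =>
    (hC false).u_mem_of_seeds hT (j := q - 1) (l := n - d - (2 * q - 1)) le_rfl (by omega)
      (fun i hi => hu₁ i (by omega)) (fun i hi => by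
        simpa [show 1 + 2 * (q - 1) + 1 + i = 2 * q + i by omega] using hv₁ i (by omega))
      x h1 (by omega)
  have hcopy₁ := (hC false).u_mem_and_v_mem hT h2kn hrim₁ hv₁
  have hbridge : (petersenSurgery n k).Adj (sheet true (inl 1)) (sheet false (inl 1)) :=
    petersenSurgery_adj_sheet_not (b := true).2 ⟨rfl, .inr rfl⟩
  have hu'₁ : sheet true (inl ((1 : ℕ) : Fin n)) ∈ T := by
    refine hT (sheet_ne_sheet_not false _ _) (by simpa using (hcopy₁ 1).1)
      (hu₂ 0 (by omega)) (by simpa using hbridge) ?_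
    simpa using (hC true).adj_rim_natCast (x := 1) (Nat.not_dvd_of_pos_of_lt one_pos (by omega))
  have hrim₂ : ∀ x, 1 ≤ x → x ≤ n - d → sheet true (inl x) ∈ T := by
    intro x h1 h2
    obtain rfl | h1 := h1.eq_or_lt
    · exact hu'₁
    exact (hC true).u_mem_of_seeds hT (j := p - 1) (l := n - d - 2 * p) one_le_two (by omega)
      (fun i hi => hu₂ i (by omega)) (fun i hi => by
        simpa [show 2 + 2 * (p - 1) + 1 + i = 2 * p + 1 + i by omega] using hv₂ i (by omega))
      x h1 (by omega)
  have hcopy₂ := (hC true).u_mem_and_v_mem hT h2kn hrim₂ hv₂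
  refine Set.eq_univ_of_forall fun x => ?_
  obtain ⟨b, i | i, rfl⟩ := exists_eq_sheet x <;> cases b
  exacts [(hcopy₁ i).1, (hcopy₂ i).1, (hcopy₁ i).2, (hcopy₂ i).2]

end Surgery

theorem stmt16 (n k : ℕ) [NeZero n] (hk1 : 1 ≤ k) (hk2 : 2 * k < n) :
    hullNumber (petersenSurgery n k) = n + 1 := by
  classical
  have hn : 3 ≤ n := by omega
  have hseeds : n + 1 ∈ {m | ∃ S, S.ncard = m ∧ IsHullSet (petersenSurgery n k) S} :=
    ⟨_, ncard_surgerySeeds hk1 hk2, isHullSet_surgerySeeds hn hk1 hk2⟩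
  refine le_antisymm (Nat.sInf_le hseeds) (le_csInf ⟨_, hseeds⟩ ?_)
  rintro _ ⟨S, rfl, hS⟩
  have hlower := two_mul_card_lt_of_isHullSet (three_le_degree_petersenSurgery hn hk1 hk2) hS
  have hedges := card_edgeFinset_petersenSurgery_le (n := n) (k := k)
  simp only [Fintype.card_sum, Fintype.card_fin] at hlower
  omega
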